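/- ℓ₂-sensitivity of the weighted multivariate Chebyshev moment map: let n, d, m be positive integers and let X = (x_1,…,x_n) and X′ = (x′_1,…,x′_n) be two tuples of points in [-1,1]^d such that x_i = x′_i for all but exactly one index i. Then Σ_{K ∈ {0,…,m}^d, K ≠ 0} (1/‖K‖₂)·( (1/n)·Σ_{i=1}^{n} T̄_K(x_i) − (1/n)·Σ_{i=1}^{n} T̄_K(x′_i) )² ≤ (4·2^d/(π^d·n²))·Σ_{K ∈ {0,…,m}^d, K ≠ 0} 1/‖K‖₂. -/

import Mathlib

open MeasureTheory Real

noncomputable section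

/-- The Chebyshev polynomials of the first kind. -/
def chebT : ℕ → ℝ → ℝ
  | 0, _ => 1
  | 1, x => x
  | n + 2, x => 2 * x * chebT (n + 1) x - chebT n x

/-- The multivariate Chebyshev polynomial `T_K(x) = ∏ i, T_{K i}(x i)`. -/
def chebTK {d : ℕ} (K : Fin d → ℕ) (x : Fin d → ℝ) : ℝ := ∏ i, chebT (K i) (x i)

/-- The number of nonzero entries of a multi-index. -/
def nnz {d : ℕ} (K : Fin d → ℕ) : ℕ := (Finset.univ.filter fun i => K i ≠ 0).card

/-- The normalized multivariate Chebyshev polynomial `T̄_K = √(2^{nnz K}/π^d)·T_K`. -/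
def chebTbarK {d : ℕ} (K : Fin d → ℕ) (x : Fin d → ℝ) : ℝ :=
  Real.sqrt ((2 : ℝ) ^ nnz K / π ^ d) * chebTK K x

/-- The Chebyshev weight function `W(x) = ∏ i, 1/√(1 − x_i²)`. -/
def chebW {d : ℕ} (x : Fin d → ℝ) : ℝ := ∏ i, 1 / Real.sqrt (1 - (x i) ^ 2)

/-- The cube `[-1,1]^d`. -/
def cube (d : ℕ) : Set (Fin d → ℝ) := Set.univ.pi fun _ => Set.Icc (-1 : ℝ) 1

lemma chebT_cos : ∀ (k : ℕ) (θ : ℝ), chebT k (Real.cos θ) = Real.cos (k * θ)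
  | 0, θ => by simp [chebT]
  | 1, θ => by simp [chebT]
  | (k + 2), θ => by
    have h1 := chebT_cos (k + 1) θ
    have h2 := chebT_cos k θ
    have hadd := Real.cos_add ((k + 1) * θ) θ
    have hsub := Real.cos_sub ((k + 1) * θ) θ
    simp only [chebT, h1, h2]
    push_cast
    have e1 : ((k : ℝ) + 1) * θ - θ = (k : ℝ) * θ := by ring
    have e2 : ((k : ℝ) + 1) * θ + θ = ((k : ℝ) + 2) * θ := by ring
    rw [e1] at hsub; rw [e2] at hadd
    nlinarith [hadd, hsub]

lemma abs_chebT_le (k : ℕ) {t : ℝ} (ht : t ∈ Set.Icc (-1 : ℝ) 1) : |chebT k t| ≤ 1 := by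
  have : t = Real.cos (Real.arccos t) := (Real.cos_arccos ht.1 ht.2).symm
  rw [this, chebT_cos]
  exact Real.abs_cos_le_one _

lemma abs_chebTbarK_le {d : ℕ} (K : Fin d → ℕ) {y : Fin d → ℝ} (hy : y ∈ cube d) :
    |chebTbarK K y| ≤ Real.sqrt ((2 : ℝ) ^ d / π ^ d) := by
  have hTK : |chebTK K y| ≤ 1 := by
    rw [chebTK, Finset.abs_prod]
    apply Finset.prod_le_one (fun i _ => abs_nonneg _)
    intro i _
    exact abs_chebT_le (K i) (hy i (Set.mem_univ i))
  have hsqrt : Real.sqrt ((2 : ℝ) ^ nnz K / π ^ d) ≤ Real.sqrt ((2 : ℝ) ^ d / π ^ d) := by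
    apply Real.sqrt_le_sqrt
    apply div_le_div_of_nonneg_right _ (pow_pos Real.pi_pos d).le
    exact pow_le_pow_right₀ one_le_two ((Finset.card_filter_le _ _).trans (by simp))
  calc |chebTbarK K y| = Real.sqrt ((2 : ℝ) ^ nnz K / π ^ d) * |chebTK K y| := by
        rw [chebTbarK, abs_mul, abs_of_nonneg (Real.sqrt_nonneg _)]
    _ ≤ Real.sqrt ((2 : ℝ) ^ nnz K / π ^ d) * 1 :=
        mul_le_mul_of_nonneg_left hTK (Real.sqrt_nonneg _)
    _ ≤ Real.sqrt ((2 : ℝ) ^ d / π ^ d) := by rw [mul_one]; exact hsqrt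

theorem weighted_multivariate_chebyshev_moment_sensitivity
    (n d m : ℕ) (hn : 0 < n) (hd : 0 < d) (hm : 0 < m)
    (x x' : Fin n → Fin d → ℝ)
    (hx : ∀ i, x i ∈ cube d) (hx' : ∀ i, x' i ∈ cube d)
    (hneighbor : ∃! i, x i ≠ x' i) :
    ∑ K ∈ (Fintype.piFinset fun _ : Fin d => Finset.range (m + 1)).filter
        (fun K => K ≠ 0),
      (1 / Real.sqrt (∑ i, ((K i : ℝ)) ^ 2)) *
        ((1 / (n : ℝ)) * ∑ i, chebTbarK K (x i) -
          (1 / (n : ℝ)) * ∑ i, chebTbarK K (x' i)) ^ 2 ≤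
      (4 * 2 ^ d / (π ^ d * (n : ℝ) ^ 2)) *
        ∑ K ∈ (Fintype.piFinset fun _ : Fin d => Finset.range (m + 1)).filter
            (fun K => K ≠ 0),
          1 / Real.sqrt (∑ i, ((K i : ℝ)) ^ 2) := by
  obtain ⟨j, hj, huniq⟩ := hneighbor
  have hnR : (0 : ℝ) < n := Nat.cast_pos.mpr hn
  have hπ : (0 : ℝ) < π ^ d := pow_pos Real.pi_pos d
  set S := Real.sqrt ((2 : ℝ) ^ d / π ^ d) with hS
  have hS2 : S ^ 2 = (2 : ℝ) ^ d / π ^ d := Real.sq_sqrt (by positivity)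
  rw [Finset.mul_sum]
  apply Finset.sum_le_sum
  intro K _
  have heq : ∀ i, i ≠ j → chebTbarK K (x i) = chebTbarK K (x' i) := by
    intro i hij
    by_cases h : x i = x' i
    · rw [h]
    · exact absurd (huniq i h) hij
  have hsum : (∑ i, chebTbarK K (x i)) - (∑ i, chebTbarK K (x' i)) =
      chebTbarK K (x j) - chebTbarK K (x' j) := by
    rw [← Finset.sum_sub_distrib]
    rw [Finset.sum_eq_single j (fun i _ hij => by rw [heq i hij, sub_self])
      (fun h => absurd (Finset.mem_univ j) h)]
  have hdiff : (1 / (n : ℝ)) * ∑ i, chebTbarK K (x i) -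
      (1 / (n : ℝ)) * ∑ i, chebTbarK K (x' i) =
      (1 / (n : ℝ)) * (chebTbarK K (x j) - chebTbarK K (x' j)) := by
    rw [← mul_sub, hsum]
  have habs : |chebTbarK K (x j) - chebTbarK K (x' j)| ≤ 2 * S := by
    calc |chebTbarK K (x j) - chebTbarK K (x' j)|
        ≤ |chebTbarK K (x j)| + |chebTbarK K (x' j)| := abs_sub _ _
      _ ≤ S + S := add_le_add (abs_chebTbarK_le K (hx j)) (abs_chebTbarK_le K (hx' j))
      _ = 2 * S := by ring
  have hsq : ((1 / (n : ℝ)) * ∑ i, chebTbarK K (x i) -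
      (1 / (n : ℝ)) * ∑ i, chebTbarK K (x' i)) ^ 2 ≤ 4 * 2 ^ d / (π ^ d * (n : ℝ) ^ 2) := by
    rw [hdiff, mul_pow]
    have h1 : (chebTbarK K (x j) - chebTbarK K (x' j)) ^ 2 ≤ (2 * S) ^ 2 := by
      rw [← sq_abs]
      exact pow_le_pow_left₀ (abs_nonneg _) habs 2
    have h2 : (2 * S) ^ 2 = 4 * ((2 : ℝ) ^ d / π ^ d) := by rw [mul_pow, hS2]; norm_num
    calc (1 / (n : ℝ)) ^ 2 * (chebTbarK K (x j) - chebTbarK K (x' j)) ^ 2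
        ≤ (1 / (n : ℝ)) ^ 2 * (2 * S) ^ 2 := by
          apply mul_le_mul_of_nonneg_left h1 (by positivity)
      _ = 4 * 2 ^ d / (π ^ d * (n : ℝ) ^ 2) := by
          rw [h2]; field_simp
  have hc : (0 : ℝ) ≤ 1 / Real.sqrt (∑ i, ((K i : ℝ)) ^ 2) := by positivity
  calc (1 / Real.sqrt (∑ i, ((K i : ℝ)) ^ 2)) *
      ((1 / (n : ℝ)) * ∑ i, chebTbarK K (x i) -
        (1 / (n : ℝ)) * ∑ i, chebTbarK K (x' i)) ^ 2
      ≤ (1 / Real.sqrt (∑ i, ((K i : ℝ)) ^ 2)) * (4 * 2 ^ d / (π ^ d * (n : ℝ) ^ 2)) :=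
        mul_le_mul_of_nonneg_left hsq hc
    _ = (4 * 2 ^ d / (π ^ d * (n : ℝ) ^ 2)) * (1 / Real.sqrt (∑ i, ((K i : ℝ)) ^ 2)) :=
        mul_comm _ _
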